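/- arXiv:1108.5157 — 13 statements merged into one kernel-verified Lean document; each statement's English description precedes it below -/
import Mathlib

section
/- Let ζ ∈ ℂ be a primitive 9th root of unity and define Q : ℤ × ℤ → ℂ by Q(m,n) = (−1)^(m²) · ζ^(m² + 3n² + 7mn). Then for S = {(1,0), (2,1), (3,2), (1,1), (1,2), (0,1)}, every Q(α) with α ∈ S is a root of unity, and the product over α ∈ S of the multiplicative order of Q(α) equals 2⁴·3⁶ = 11664. -/
/-!
On `S` the values of `Q` are `-ζ, ζ³, -1, -ζ², -1, ζ³`. Since `ζ` and `ζ²` are primitive 9th roots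
of unity and `-1` has order 2, coprime to 9, the orders are `18, 3, 2, 18, 2, 3`.
-/

theorem IsPrimitiveRoot.neg_of_odd {R : Type*} [CommRing R] [Nontrivial R] {ζ : R} {n : ℕ}
    (h : IsPrimitiveRoot ζ n) (hn : Odd n) (hR : ringChar R ≠ 2) :
    IsPrimitiveRoot (-ζ) (2 * n) := by
  have hneg : IsPrimitiveRoot (-1 : R) 2 := IsPrimitiveRoot.neg_one (ringChar R) hR
  have hcop : (orderOf (-1 : R)).Coprime (orderOf ζ) := by
    rw [← hneg.eq_orderOf, ← h.eq_orderOf]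
    exact hn.coprime_two_left
  rw [IsPrimitiveRoot.iff_orderOf, neg_eq_neg_one_mul,
    (Commute.all _ _).orderOf_mul_eq_mul_orderOf_of_coprime hcop, ← hneg.eq_orderOf,
    ← h.eq_orderOf]

theorem stmt_5 (ζ : ℂ) (hζ : IsPrimitiveRoot ζ 9)
    (Q : ℤ × ℤ → ℂ) (hQ : ∀ m n : ℤ, Q (m, n) = (-1 : ℂ) ^ (m^2) * ζ ^ (m^2 + 3*n^2 + 7*m*n))
    (S : Finset (ℤ × ℤ)) (hS : S = {(1,0), (2,1), (3,2), (1,1), (1,2), (0,1)}) :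
    (∀ α ∈ S, IsOfFinOrder (Q α)) ∧ ∏ α ∈ S, orderOf (Q α) = 2^4 * 3^6 := by
  have hchar : ringChar ℂ ≠ 2 := by simp [ringChar.eq_zero]
  have hpow (k : ℕ) : ζ ^ k = ζ ^ (k % 9) := by rw [hζ.eq_orderOf, pow_mod_orderOf]
  have h10 : IsPrimitiveRoot (Q (1, 0)) 18 := by
    rw [hQ]; norm_num; exact hζ.neg_of_odd (by decide) hchar
  have h21 : IsPrimitiveRoot (Q (2, 1)) 3 := by
    rw [hQ]; norm_num [hpow 21]; exact hζ.pow (by norm_num) rfl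
  have h32 : IsPrimitiveRoot (Q (3, 2)) 2 := by
    rw [hQ]; norm_num [hpow 63]; exact IsPrimitiveRoot.neg_one 0 (by decide)
  have h11 : IsPrimitiveRoot (Q (1, 1)) 18 := by
    rw [hQ]; norm_num [hpow 11]
    exact (hζ.pow_of_coprime 2 (by decide)).neg_of_odd (by decide) hchar
  have h12 : IsPrimitiveRoot (Q (1, 2)) 2 := by
    rw [hQ]; norm_num [hpow 27]; exact IsPrimitiveRoot.neg_one 0 (by decide)
  have h01 : IsPrimitiveRoot (Q (0, 1)) 3 := by
    rw [hQ]; norm_num; exact hζ.pow (by norm_num) rfl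
  subst hS
  refine ⟨?_, ?_⟩
  · simp only [Finset.mem_insert, Finset.mem_singleton]
    rintro _ (rfl | rfl | rfl | rfl | rfl | rfl)
    exacts [h10.isOfFinOrder (by norm_num), h21.isOfFinOrder (by norm_num),
      h32.isOfFinOrder (by norm_num), h11.isOfFinOrder (by norm_num),
      h12.isOfFinOrder (by norm_num), h01.isOfFinOrder (by norm_num)]
  · repeat rw [Finset.prod_insert (by decide)]
    rw [Finset.prod_singleton, ← h10.eq_orderOf, ← h21.eq_orderOf, ← h32.eq_orderOf,
      ← h11.eq_orderOf, ← h12.eq_orderOf, ← h01.eq_orderOf]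
    norm_num
end

section
/- Let ζ ∈ ℂ be a primitive 9th root of unity and define Q : ℤ × ℤ → ℂ by Q(m,n) = (−1)^(n²) · ζ^(3m² + 8mn). Then for S = {(1,0), (2,1), (3,2), (4,3), (1,1), (0,1)}, every Q(α) with α ∈ S is a root of unity, and the product over α ∈ S of the multiplicative order of Q(α) equals 2⁴·3⁶ = 11664. -/
/-!
Choose a primitive 18th root of unity ω with ω² = ζ and ω⁹ = -1 (namely ω = -ζ⁵). Then
Q(m,n) = ω^(6m² + 16mn + 9n²), so Q(α) is a primitive root of unity of order 18 / gcd(18, e(α)),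
where e(α) is that quadratic form. On S the form takes the values 6, 65, 186, 369, 31, 9,
giving the orders 3, 18, 3, 2, 18, 2.
-/

theorem IsPrimitiveRoot.pow_div_gcd {M : Type*} [CommMonoid M] {ζ : M} {n : ℕ}
    (h : IsPrimitiveRoot ζ n) (hn : n ≠ 0) (m : ℕ) : IsPrimitiveRoot (ζ ^ m) (n / n.gcd m) := by
  have := IsPrimitiveRoot.orderOf (ζ ^ m)
  rwa [(h.isOfFinOrder hn).orderOf_pow, ← h.eq_orderOf] at this

theorem IsPrimitiveRoot.zpow_div_gcd {G : Type*} [DivisionCommMonoid G] {ζ : G} {n : ℕ}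
    (h : IsPrimitiveRoot ζ n) (hn : n ≠ 0) (k : ℤ) :
    IsPrimitiveRoot (ζ ^ k) (n / Int.gcd n k) := by
  obtain ⟨m, rfl | rfl⟩ := Int.eq_nat_or_neg k
  · simpa using h.pow_div_gcd hn m
  · simpa [zpow_neg, ← inv_pow] using h.inv.pow_div_gcd hn m

theorem orderOf_neg_of_odd {R : Type*} [Ring R] [Nontrivial R] (hR : ringChar R ≠ 2) {x : R}
    (hx : Odd (orderOf x)) : orderOf (-x) = 2 * orderOf x := by
  rw [← neg_one_mul, (Commute.neg_one_left x).orderOf_mul_eq_mul_orderOf_of_coprime,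
    orderOf_neg_one, if_neg hR]
  rwa [orderOf_neg_one, if_neg hR, Nat.coprime_two_left]

theorem IsPrimitiveRoot.exists_sq_eq_of_odd {R : Type*} [CommRing R] [Nontrivial R]
    (hR : ringChar R ≠ 2) {ζ : R} {n : ℕ} (hn : Odd n) (h : IsPrimitiveRoot ζ n) :
    ∃ ω : R, IsPrimitiveRoot ω (2 * n) ∧ ω ^ 2 = ζ ∧ ω ^ n = -1 := by
  obtain ⟨k, rfl⟩ := hn
  have hcop : (k + 1).Coprime (2 * k + 1) := by
    rw [show 2 * k + 1 = k + (k + 1) by ring, Nat.coprime_add_self_right]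
    simp
  have hord : orderOf (ζ ^ (k + 1)) = 2 * k + 1 := (h.pow_of_coprime _ hcop).eq_orderOf.symm
  refine ⟨-ζ ^ (k + 1), ?_, ?_, ?_⟩
  · rw [← hord, ← orderOf_neg_of_odd hR (hord ▸ odd_two_mul_add_one k)]
    exact IsPrimitiveRoot.orderOf _
  · rw [neg_sq, ← pow_mul, show (k + 1) * 2 = (2 * k + 1) + 1 by ring, pow_succ, h.pow_eq_one,
      one_mul]
  · rw [neg_pow, (odd_two_mul_add_one k).neg_one_pow, neg_one_mul, ← pow_mul, mul_comm, pow_mul,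
      h.pow_eq_one, one_pow]

theorem stmt_6 (ζ : ℂ) (hζ : IsPrimitiveRoot ζ 9)
    (Q : ℤ × ℤ → ℂ) (hQ : ∀ m n : ℤ, Q (m, n) = (-1 : ℂ) ^ (n^2) * ζ ^ (3*m^2 + 8*m*n))
    (S : Finset (ℤ × ℤ)) (hS : S = {(1,0), (2,1), (3,2), (4,3), (1,1), (0,1)}) :
    (∀ α ∈ S, IsOfFinOrder (Q α)) ∧ ∏ α ∈ S, orderOf (Q α) = 2^4 * 3^6 := by
  obtain ⟨ω, hω, hω2, hω9⟩ := hζ.exists_sq_eq_of_odd (by simp [ringChar.eq_zero]) (by decide)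
  have hQω : ∀ m n : ℤ, Q (m, n) = ω ^ (6 * m ^ 2 + 16 * m * n + 9 * n ^ 2) := by
    intro m n
    rw [hQ, ← hω9, ← hω2, ← zpow_natCast, ← zpow_natCast, ← zpow_mul, ← zpow_mul,
      ← zpow_add₀ (hω.ne_zero (by norm_num))]
    ring_nf
  have hQ_prim : ∀ α : ℤ × ℤ,
      IsPrimitiveRoot (Q α) (18 / Int.gcd 18 (6 * α.1 ^ 2 + 16 * α.1 * α.2 + 9 * α.2 ^ 2)) :=
    fun ⟨m, n⟩ ↦ hQω m n ▸ hω.zpow_div_gcd (by norm_num) _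
  subst hS
  refine ⟨fun α hα ↦ (hQ_prim α).isOfFinOrder ?_, ?_⟩
  · fin_cases hα <;> decide
  · simp_rw [← (hQ_prim _).eq_orderOf]
    decide
end

section
/- Let ζ ∈ ℂ be a primitive 9th root of unity and define Q : ℤ × ℤ → ℂ by Q(m,n) = (−1)^(m² + n²) · ζ^(2m² + mn). Then for S = {(1,0), (4,1), (3,1), (2,1), (1,1), (0,1)}, every Q(α) with α ∈ S is a root of unity, and the product over α ∈ S of the multiplicative order of Q(α) equals 2⁴·3⁶ = 11664. -/
theorem stmt_7 (ζ : ℂ) (hζ : IsPrimitiveRoot ζ 9)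
    (Q : ℤ × ℤ → ℂ) (hQ : ∀ m n : ℤ, Q (m, n) = (-1 : ℂ) ^ (m^2 + n^2) * ζ ^ (2*m^2 + m*n))
    (S : Finset (ℤ × ℤ)) (hS : S = {(1,0), (4,1), (3,1), (2,1), (1,1), (0,1)}) :
    (∀ α ∈ S, IsOfFinOrder (Q α)) ∧ ∏ α ∈ S, orderOf (Q α) = 2^4 * 3^6 := by
  have hz9 : ζ ^ (9:ℕ) = 1 := hζ.pow_eq_one
  have h9 : orderOf ζ = 9 := hζ.eq_orderOf.symm
  have h2 : orderOf (-1 : ℂ) = 2 := by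
    rw [orderOf_neg_one, if_neg]; simp [ringChar.eq_zero]
  -- values
  have v10 : Q (1,0) = (-1) * ζ^(2:ℕ) := by rw [hQ]; norm_num
  have v41 : Q (4,1) = -1 := by
    rw [hQ]; norm_num
    norm_cast
    calc ζ^(36:ℕ) = (ζ^(9:ℕ))^(4:ℕ) := by ring
    _ = 1 := by rw [hz9]; norm_num
  have v31 : Q (3,1) = ζ^(3:ℕ) := by
    rw [hQ]; norm_num
    norm_cast
    calc ζ^(21:ℕ) = (ζ^(9:ℕ))^(2:ℕ) * ζ^(3:ℕ) := by ring
    _ = ζ^(3:ℕ) := by rw [hz9]; norm_num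
  have v21 : Q (2,1) = (-1) * ζ := by
    rw [hQ]; norm_num
    norm_cast
    calc ζ^(10:ℕ) = ζ^(9:ℕ) * ζ := by ring
    _ = ζ := by rw [hz9]; ring
  have v11 : Q (1,1) = ζ^(3:ℕ) := by rw [hQ]; norm_num
  have v01 : Q (0,1) = -1 := by rw [hQ]; norm_num
  -- orders
  have hp2 : IsPrimitiveRoot (ζ^(2:ℕ)) 9 := hζ.pow_of_coprime 2 (by norm_num)
  have ho2 : orderOf (ζ^(2:ℕ)) = 9 := hp2.eq_orderOf.symm
  have hp3 : IsPrimitiveRoot (ζ^(3:ℕ)) 3 := hζ.pow (by norm_num) (by norm_num)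
  have ho3 : orderOf (ζ^(3:ℕ)) = 3 := hp3.eq_orderOf.symm
  have o10 : orderOf (Q (1,0)) = 18 := by
    rw [v10, (Commute.all _ _).orderOf_mul_eq_mul_orderOf_of_coprime
      (by rw [h2, ho2]; norm_num), h2, ho2]
  have o21 : orderOf (Q (2,1)) = 18 := by
    rw [v21, (Commute.all _ _).orderOf_mul_eq_mul_orderOf_of_coprime
      (by rw [h2, h9]; norm_num), h2, h9]
  have o41 : orderOf (Q (4,1)) = 2 := by rw [v41, h2]
  have o01 : orderOf (Q (0,1)) = 2 := by rw [v01, h2]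
  have o31 : orderOf (Q (3,1)) = 3 := by rw [v31, ho3]
  have o11 : orderOf (Q (1,1)) = 3 := by rw [v11, ho3]
  have o11' : orderOf (Q 1) = 3 := o11
  constructor
  · intro α hα
    rw [← orderOf_pos_iff]
    rw [hS] at hα
    simp only [Finset.mem_insert, Finset.mem_singleton] at hα
    rcases hα with rfl | rfl | rfl | rfl | rfl | rfl <;>
      simp [o10, o41, o31, o21, o11, o11', o01]
  · rw [hS]
    norm_num [Finset.prod_insert, Finset.mem_insert, Finset.mem_singleton,
      Prod.ext_iff, o10, o41, o31, o21, o11, o11', o01]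
end

section
/- Let ζ ∈ ℂ be a primitive 5th root of unity and define Q : ℤ × ℤ → ℂ by Q(m,n) = (−1)^(n²) · ζ^(m² + 2mn). Then for S = {(1,0), (3,1), (2,1), (5,3), (3,2), (4,3), (1,1), (0,1)}, every Q(α) with α ∈ S is a root of unity, and the product over α ∈ S of the multiplicative order of Q(α) equals 2⁶·5⁴ = 40000. -/
/-!
`Q (m, n)` is the product of `(-1) ^ n²` and `ζ ^ (m² + 2mn)`, whose orders divide the coprime
numbers `2` and `5`; so its order is the product of the two orders, and a power of a primitive
`p`-th root of unity, `p` prime, has order `1` or `p` according as `p` divides the exponent.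
-/

theorem orderOf_mul_eq_mul_orderOf_of_pow_eq_one_of_coprime {M : Type*} [CommMonoid M]
    {x y : M} {a b : ℕ} (hx : x ^ a = 1) (hy : y ^ b = 1) (hab : a.Coprime b) :
    orderOf (x * y) = orderOf x * orderOf y :=
  (Commute.all x y).orderOf_mul_eq_mul_orderOf_of_coprime <|
    (hab.coprime_dvd_left (orderOf_dvd_of_pow_eq_one hx)).coprime_dvd_right
      (orderOf_dvd_of_pow_eq_one hy)

namespace IsPrimitiveRoot

variable {G : Type*} [DivisionCommMonoid G] {ζ : G} {k : ℕ}

theorem zpow_pow_eq_one (h : IsPrimitiveRoot ζ k) (l : ℤ) : (ζ ^ l) ^ k = 1 := by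
  rw [← zpow_natCast, ← zpow_mul, mul_comm, zpow_mul, h.zpow_eq_one, one_zpow]

theorem orderOf_zpow_of_prime [Fact k.Prime] (h : IsPrimitiveRoot ζ k) (l : ℤ) :
    orderOf (ζ ^ l) = if (k : ℤ) ∣ l then 1 else k := by
  split_ifs with hl
  · rw [(h.zpow_eq_one_iff_dvd l).mpr hl, orderOf_one]
  · exact orderOf_eq_prime (h.zpow_pow_eq_one l) (mt (h.zpow_eq_one_iff_dvd l).mp hl)

end IsPrimitiveRoot

theorem stmt_8 (ζ : ℂ) (hζ : IsPrimitiveRoot ζ 5)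
    (Q : ℤ × ℤ → ℂ) (hQ : ∀ m n : ℤ, Q (m, n) = (-1 : ℂ) ^ (n^2) * ζ ^ (m^2 + 2*m*n))
    (S : Finset (ℤ × ℤ)) (hS : S = {(1,0), (3,1), (2,1), (5,3), (3,2), (4,3), (1,1), (0,1)}) :
    (∀ α ∈ S, IsOfFinOrder (Q α)) ∧ ∏ α ∈ S, orderOf (Q α) = 2^6 * 5^4 := by
  have hneg : IsPrimitiveRoot (-1 : ℂ) 2 := IsPrimitiveRoot.neg_one 0 (by norm_num)
  have : Fact (Nat.Prime 5) := ⟨by norm_num⟩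
  have horder : ∀ m n : ℤ, orderOf (Q (m, n)) =
      (if 2 ∣ n ^ 2 then 1 else 2) * (if 5 ∣ m ^ 2 + 2 * m * n then 1 else 5) := by
    intro m n
    rw [hQ, orderOf_mul_eq_mul_orderOf_of_pow_eq_one_of_coprime (hneg.zpow_pow_eq_one _)
      (hζ.zpow_pow_eq_one _) (by norm_num), hneg.orderOf_zpow_of_prime, hζ.orderOf_zpow_of_prime]
    norm_cast
  refine ⟨fun α _ => orderOf_pos_iff.mp ?_, ?_⟩
  · rw [horder]
    positivity
  · subst hS
    simp only [horder]
    decide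
end

section
/- Let ζ ∈ ℂ be a primitive 5th root of unity and define Q : ℤ × ℤ → ℂ by Q(m,n) = (−1)^(m² + n²) · ζ^(3m² + 3mn). Then for S = {(1,0), (4,1), (3,1), (5,2), (2,1), (3,2), (1,1), (0,1)}, every Q(α) with α ∈ S is a root of unity, and the product over α ∈ S of the multiplicative order of Q(α) equals 2⁶·5⁴ = 40000. -/
/-!
`Q (m, n)` is a power of `-1` times a power of `ζ`; their orders (`1` or `2`, and `1` or `5`) are
coprime, so the order of `Q (m, n)` is their product, determined by the parity of `m² + n²` and by
whether `5 ∣ 3m² + 3mn`.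
-/

theorem orderOf_neg_one_zpow {K : Type*} [DivisionRing K] (hK : ringChar K ≠ 2) (a : ℤ) :
    orderOf ((-1 : K) ^ a) = if Even a then 1 else 2 := by
  rcases Int.even_or_odd a with ha | ha
  · simp [ha.neg_one_zpow, ha]
  · simp [ha.neg_one_zpow, hK, Int.not_even_iff_odd.2 ha]

theorem IsPrimitiveRoot.orderOf_zpow_of_prime_s9 {G : Type*} [DivisionCommMonoid G] {ζ : G} {p : ℕ}
    [Fact p.Prime] (hζ : IsPrimitiveRoot ζ p) (b : ℤ) :
    orderOf (ζ ^ b) = if (p : ℤ) ∣ b then 1 else p := by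
  split_ifs with hb
  · rw [(hζ.zpow_eq_one_iff_dvd b).2 hb, orderOf_one]
  · refine orderOf_eq_prime ?_ (mt (hζ.zpow_eq_one_iff_dvd b).1 hb)
    rw [← zpow_natCast, ← zpow_mul, mul_comm, zpow_mul, hζ.zpow_eq_one, one_zpow]

theorem IsPrimitiveRoot.orderOf_neg_one_zpow_mul_zpow {K : Type*} [Field K] (hK : ringChar K ≠ 2)
    {ζ : K} {p : ℕ} [Fact p.Prime] (hζ : IsPrimitiveRoot ζ p) (hp : p ≠ 2) (a b : ℤ) :
    orderOf ((-1 : K) ^ a * ζ ^ b) =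
      (if Even a then 1 else 2) * (if (p : ℤ) ∣ b then 1 else p) := by
  have hodd : Odd p := (Fact.out : p.Prime).odd_of_ne_two hp
  have hcop : Nat.Coprime (orderOf ((-1 : K) ^ a)) (orderOf (ζ ^ b)) := by
    rw [orderOf_neg_one_zpow hK, hζ.orderOf_zpow_of_prime_s9]
    split_ifs <;> simp [hodd]
  rw [(Commute.all _ _).orderOf_mul_eq_mul_orderOf_of_coprime hcop, orderOf_neg_one_zpow hK,
    hζ.orderOf_zpow_of_prime_s9]

theorem stmt_9 (ζ : ℂ) (hζ : IsPrimitiveRoot ζ 5)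
    (Q : ℤ × ℤ → ℂ) (hQ : ∀ m n : ℤ, Q (m, n) = (-1 : ℂ) ^ (m^2 + n^2) * ζ ^ (3*m^2 + 3*m*n))
    (S : Finset (ℤ × ℤ)) (hS : S = {(1,0), (4,1), (3,1), (5,2), (2,1), (3,2), (1,1), (0,1)}) :
    (∀ α ∈ S, IsOfFinOrder (Q α)) ∧ ∏ α ∈ S, orderOf (Q α) = 2^6 * 5^4 := by
  have : Fact (Nat.Prime 5) := ⟨by norm_num⟩
  have horderOf : ∀ α : ℤ × ℤ, orderOf (Q α) = (if Even (α.1^2 + α.2^2) then 1 else 2) *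
      (if ((5 : ℕ) : ℤ) ∣ 3*α.1^2 + 3*α.1*α.2 then 1 else 5) := fun ⟨m, n⟩ => by
    rw [hQ, hζ.orderOf_neg_one_zpow_mul_zpow (by simp) (by norm_num)]
  refine ⟨fun α _ => orderOf_pos_iff.1 ?_, ?_⟩
  · rw [horderOf]
    split_ifs <;> norm_num
  · simp only [hS, horderOf]
    decide
end

section
/- Let ζ ∈ ℂ be a primitive 20th root of unity and define Q : ℤ × ℤ → ℂ by Q(m,n) = (−1)^(n²) · ζ^(m² + 17mn). Then for S = {(1,0), (3,1), (2,1), (5,3), (3,2), (4,3), (1,1), (0,1)}, every Q(α) with α ∈ S is a root of unity, and the product over α ∈ S of the multiplicative order of Q(α) equals 2⁸·5⁴ = 160000. -/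
theorem stmt_10 (ζ : ℂ) (hζ : IsPrimitiveRoot ζ 20)
    (Q : ℤ × ℤ → ℂ) (hQ : ∀ m n : ℤ, Q (m, n) = (-1 : ℂ) ^ (n^2) * ζ ^ (m^2 + 17*m*n))
    (S : Finset (ℤ × ℤ)) (hS : S = {(1,0), (3,1), (2,1), (5,3), (3,2), (4,3), (1,1), (0,1)}) :
    (∀ α ∈ S, IsOfFinOrder (Q α)) ∧ ∏ α ∈ S, orderOf (Q α) = 2^8 * 5^4 := by
  have h20 : ζ ^ (20:ℕ) = 1 := hζ.pow_eq_one
  have hord : orderOf ζ = 20 := hζ.eq_orderOf.symm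
  have hmod : ∀ a b : ℕ, ζ ^ (20*a+b) = ζ ^ b := by
    intro a b; rw [pow_add, pow_mul, h20, one_pow, one_mul]
  have h10 : ζ ^ (10:ℕ) = -1 := by
    have hsq : (ζ^(10:ℕ) - 1) * (ζ^(10:ℕ) + 1) = 0 := by
      have : (ζ^(10:ℕ))^2 = 1 := by rw [← pow_mul]; exact h20
      linear_combination this
    have hne1 : ζ^(10:ℕ) ≠ 1 := hζ.pow_ne_one_of_pos_of_lt (by norm_num) (by norm_num)
    rcases mul_eq_zero.mp hsq with h | h
    · exact absurd (sub_eq_zero.mp h) hne1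
    · exact eq_neg_of_add_eq_zero_left h
  -- values
  have v1 : Q (1,0) = ζ := by rw [hQ]; norm_num
  have v2 : Q (3,1) = -1 := by
    rw [hQ]; norm_num
    exact_mod_cast (hmod 3 0).trans (pow_zero ζ)
  have v3 : Q (2,1) = ζ ^ (8:ℕ) := by
    rw [hQ]; norm_num
    have : -ζ^(38:ℕ) = ζ^(8:ℕ) := by
      rw [neg_eq_neg_one_mul, ← h10, ← pow_add]; exact hmod 2 8
    exact_mod_cast this
  have v4 : Q (5,3) = -1 := by
    rw [hQ]; norm_num
    exact_mod_cast (hmod 14 0).trans (pow_zero ζ)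
  have v5 : Q (3,2) = ζ ^ (11:ℕ) := by
    rw [hQ]; norm_num
    exact_mod_cast hmod 5 11
  have v6 : Q (4,3) = -1 := by
    rw [hQ]; norm_num
    exact_mod_cast (hmod 11 0).trans (pow_zero ζ)
  have v7 : Q (1,1) = ζ ^ (8:ℕ) := by
    rw [hQ]; norm_num
    have : -ζ^(18:ℕ) = ζ^(8:ℕ) := by
      rw [neg_eq_neg_one_mul, ← h10, ← pow_add]; exact hmod 1 8
    exact_mod_cast this
  have v8 : Q (0,1) = -1 := by rw [hQ]; norm_num
  -- orders
  have oζ : orderOf ζ = 20 := hord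
  have oneg : orderOf (-1 : ℂ) = 2 := by rw [orderOf_neg_one]; norm_num [ringChar.eq_zero]
  have o8 : orderOf (ζ ^ (8:ℕ)) = 5 := by
    rw [orderOf_pow' ζ (by norm_num : (8:ℕ) ≠ 0), hord]; rfl
  have o11 : orderOf (ζ ^ (11:ℕ)) = 20 := by
    rw [orderOf_pow' ζ (by norm_num : (11:ℕ) ≠ 0), hord]; rfl
  have hfin : IsOfFinOrder ζ := isOfFinOrder_iff_pow_eq_one.mpr ⟨20, by norm_num, h20⟩
  have hfneg : IsOfFinOrder (-1 : ℂ) := isOfFinOrder_iff_pow_eq_one.mpr ⟨2, by norm_num, by norm_num⟩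
  subst hS
  constructor
  · intro α hα
    fin_cases hα
    · rw [v1]; exact hfin
    · rw [v2]; exact hfneg
    · rw [v3]; exact hfin.pow
    · rw [v4]; exact hfneg
    · rw [v5]; exact hfin.pow
    · rw [v6]; exact hfneg
    · rw [v7]; exact hfin.pow
    · rw [v8]; exact hfneg
  · rw [Finset.prod_insert (by decide), Finset.prod_insert (by decide),
      Finset.prod_insert (by decide), Finset.prod_insert (by decide),
      Finset.prod_insert (by decide), Finset.prod_insert (by decide),
      Finset.prod_insert (by decide), Finset.prod_singleton,
      v1, v2, v3, v4, v5, v6, v7, v8, oζ, oneg, o8, o11]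
    norm_num
end

section
/- Let ζ ∈ ℂ be a primitive 15th root of unity and define Q : ℤ × ℤ → ℂ by Q(m,n) = (−1)^(m² + mn) · ζ^(m² + 5n² + 12mn). Then for S = {(1,0), (3,1), (5,2), (2,1), (3,2), (1,1), (1,2), (0,1)}, every Q(α) with α ∈ S is a root of unity, and the product over α ∈ S of the multiplicative order of Q(α) equals 30⁴ = 810000. -/
theorem stmt_11 (ζ : ℂ) (hζ : IsPrimitiveRoot ζ 15)
    (Q : ℤ × ℤ → ℂ) (hQ : ∀ m n : ℤ, Q (m, n) = (-1 : ℂ) ^ (m^2 + m*n) * ζ ^ (m^2 + 5*n^2 + 12*m*n))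
    (S : Finset (ℤ × ℤ)) (hS : S = {(1,0), (3,1), (5,2), (2,1), (3,2), (1,1), (1,2), (0,1)}) :
    (∀ α ∈ S, IsOfFinOrder (Q α)) ∧ ∏ α ∈ S, orderOf (Q α) = 30^4 := by
  have h15 : ζ ^ 15 = 1 := hζ.pow_eq_one
  have hp : ∀ a b : ℕ, ζ ^ ((a + 15*b : ℕ) : ℤ) = ζ ^ a := by
    intro a b
    rw [zpow_natCast, pow_add, pow_mul, h15, one_pow, mul_one]
  -- values of Q on S
  have q1 : Q (1,0) = -ζ := by rw [hQ]; norm_num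
  have q2 : Q (3,1) = ζ^5 := by rw [hQ]; norm_num; exact_mod_cast hp 5 3
  have q3 : Q (5,2) = -1 := by rw [hQ]; norm_num; exact_mod_cast hp 0 11
  have q4 : Q (2,1) = ζ^3 := by rw [hQ]; norm_num; exact_mod_cast hp 3 2
  have q5 : Q (3,2) = -ζ^11 := by rw [hQ]; norm_num; exact_mod_cast hp 11 6
  have q6 : Q (1,1) = ζ^3 := by rw [hQ]; norm_num; exact_mod_cast hp 3 1
  have q7 : Q (1,2) = -1 := by rw [hQ]; norm_num; exact_mod_cast hp 0 3
  have q8 : Q (0,1) = ζ^5 := by rw [hQ]; norm_num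
  -- orders
  have hζord : orderOf ζ = 15 := hζ.eq_orderOf.symm
  have hneg1 : orderOf (-1 : ℂ) = 2 := by
    rw [orderOf_neg_one]
    norm_num [ringChar.eq_zero]
  have hμ : orderOf (-ζ : ℂ) = 30 := by
    have hc := (Commute.all (-1 : ℂ) ζ).orderOf_mul_eq_mul_orderOf_of_coprime
      (by rw [hneg1, hζord]; norm_num)
    rw [neg_one_mul] at hc
    rw [hc, hneg1, hζord]
  have hμp : IsPrimitiveRoot (-ζ : ℂ) 30 := hμ ▸ IsPrimitiveRoot.orderOf (-ζ)
  have o1 : orderOf (-ζ : ℂ) = 30 := hμ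
  have o2 : orderOf (ζ^5 : ℂ) = 3 :=
    ((hζ.pow (by norm_num) (show 15 = 5*3 by norm_num)).eq_orderOf).symm
  have o3 : orderOf (-1 : ℂ) = 2 := hneg1
  have o4 : orderOf (ζ^3 : ℂ) = 5 :=
    ((hζ.pow (by norm_num) (show 15 = 3*5 by norm_num)).eq_orderOf).symm
  have o5 : orderOf (-ζ^11 : ℂ) = 30 := by
    have h11 : (-ζ)^11 = -ζ^11 := by ring
    have := (hμp.pow_of_coprime 11 (by norm_num)).eq_orderOf.symm
    rwa [h11] at this
  have hSvals : ∀ α ∈ S,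
      orderOf (Q α) = 30 ∨ orderOf (Q α) = 3 ∨ orderOf (Q α) = 2 ∨ orderOf (Q α) = 5 := by
    intro α hα
    rw [hS] at hα
    fin_cases hα <;>
      simp only [q1, q2, q3, q4, q5, q6, q7, q8, o1, o2, o3, o4, o5] <;> tauto
  constructor
  · intro α hα
    rcases hSvals α hα with h | h | h | h <;>
      · rw [← orderOf_pos_iff]
        omega
  · rw [hS]
    rw [show ({(1,0), (3,1), (5,2), (2,1), (3,2), (1,1), (1,2), (0,1)} : Finset (ℤ × ℤ))
        = insert (1,0) (insert (3,1) (insert (5,2) (insert (2,1) (insert (3,2)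
          (insert (1,1) (insert (1,2) ({(0,1)} : Finset (ℤ × ℤ)))))))) from rfl]
    rw [Finset.prod_insert (by decide), Finset.prod_insert (by decide),
      Finset.prod_insert (by decide), Finset.prod_insert (by decide),
      Finset.prod_insert (by decide), Finset.prod_insert (by decide),
      Finset.prod_insert (by decide), Finset.prod_singleton]
    rw [q1, q2, q3, q4, q5, q6, q7, q8, o1, o2, o3, o4, o5]
    norm_num
end

section
/- Let ζ ∈ ℂ be a primitive 15th root of unity and define Q : ℤ × ℤ → ℂ by Q(m,n) = (−1)^(n² + mn) · ζ^(3m² + 11n² + 4mn). Then for S = {(1,0), (4,1), (3,1), (2,1), (3,2), (4,3), (1,1), (0,1)}, every Q(α) with α ∈ S is a root of unity, and the product over α ∈ S of the multiplicative order of Q(α) equals 30⁴ = 810000. -/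
theorem stmt_12 (ζ : ℂ) (hζ : IsPrimitiveRoot ζ 15)
    (Q : ℤ × ℤ → ℂ) (hQ : ∀ m n : ℤ, Q (m, n) = (-1 : ℂ) ^ (n^2 + m*n) * ζ ^ (3*m^2 + 11*n^2 + 4*m*n))
    (S : Finset (ℤ × ℤ)) (hS : S = {(1,0), (4,1), (3,1), (2,1), (3,2), (4,3), (1,1), (0,1)}) :
    (∀ α ∈ S, IsOfFinOrder (Q α)) ∧ ∏ α ∈ S, orderOf (Q α) = 30^4 := by
  have hz15 : ζ ^ (15 : ℕ) = 1 := hζ.pow_eq_one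
  have hord : orderOf ζ = 15 := hζ.eq_orderOf.symm
  have hred : ∀ k : ℕ, ζ ^ k = ζ ^ (k % 15) := by
    intro k
    conv_lhs => rw [← Nat.div_add_mod k 15]
    rw [pow_add, pow_mul, hz15, one_pow, one_mul]
  -- values
  have v1 : Q (1,0) = ζ ^ (3 : ℕ) := by
    rw [hQ 1 0]; norm_num
  have v2 : Q (4,1) = -1 := by
    rw [hQ 4 1]; norm_num
    show ζ ^ (75:ℕ) = 1
    rw [hred]; norm_num
  have v3 : Q (3,1) = ζ ^ (5 : ℕ) := by
    rw [hQ 3 1]; norm_num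
    show ζ ^ (50:ℕ) = ζ ^ (5:ℕ)
    rw [hred]
  have v4 : Q (2,1) = -1 * ζ := by
    rw [hQ 2 1]; norm_num
    show ζ ^ (31:ℕ) = ζ
    rw [hred]; norm_num
  have v5 : Q (3,2) = ζ ^ (5 : ℕ) := by
    rw [hQ 3 2]; norm_num
    show ζ ^ (95:ℕ) = ζ ^ (5:ℕ)
    rw [hred]
  have v6 : Q (4,3) = -1 := by
    rw [hQ 4 3]; norm_num
    show ζ ^ (195:ℕ) = 1
    rw [hred]; norm_num
  have v7 : Q (1,1) = ζ ^ (3 : ℕ) := by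
    rw [hQ 1 1]; norm_num
    show ζ ^ (18:ℕ) = ζ ^ (3:ℕ)
    rw [hred]
  have v8 : Q (0,1) = -1 * ζ ^ (11 : ℕ) := by
    rw [hQ 0 1]; norm_num
  -- orders
  have hneg : orderOf (-1 : ℂ) = 2 := by
    rw [orderOf_neg_one]; simp [ringChar.eq_zero]
  have o1 : orderOf (Q (1,0)) = 5 := by
    rw [v1, orderOf_pow' ζ (by norm_num : (3:ℕ) ≠ 0), hord]; decide
  have o2 : orderOf (Q (4,1)) = 2 := by rw [v2, hneg]
  have o3 : orderOf (Q (3,1)) = 3 := by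
    rw [v3, orderOf_pow' ζ (by norm_num : (5:ℕ) ≠ 0), hord]; decide
  have o11 : orderOf (ζ ^ (11:ℕ)) = 15 := by
    rw [orderOf_pow' ζ (by norm_num : (11:ℕ) ≠ 0), hord]; decide
  have o4 : orderOf (Q (2,1)) = 30 := by
    rw [v4, Commute.orderOf_mul_eq_mul_orderOf_of_coprime (Commute.neg_one_left ζ)
      (by rw [hneg, hord]; norm_num), hneg, hord]
  have o5 : orderOf (Q (3,2)) = 3 := by
    rw [v5, orderOf_pow' ζ (by norm_num : (5:ℕ) ≠ 0), hord]; decide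
  have o6 : orderOf (Q (4,3)) = 2 := by rw [v6, hneg]
  have o7 : orderOf (Q (1,1)) = 5 := by
    rw [v7, orderOf_pow' ζ (by norm_num : (3:ℕ) ≠ 0), hord]; decide
  have o8 : orderOf (Q (0,1)) = 30 := by
    rw [v8, Commute.orderOf_mul_eq_mul_orderOf_of_coprime (Commute.neg_one_left _)
      (by rw [hneg, o11]; norm_num), hneg, o11]
  constructor
  · intro α hα
    rw [hS] at hα
    simp only [Finset.mem_insert, Finset.mem_singleton] at hα
    rcases hα with h|h|h|h|h|h|h|h <;> subst h <;>
      refine orderOf_pos_iff.mp ?_ <;>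
      simp only [o1, o2, o3, o4, o5, o6, o7, o8] <;> norm_num
  · rw [hS]
    rw [Finset.prod_insert (by decide), Finset.prod_insert (by decide),
      Finset.prod_insert (by decide), Finset.prod_insert (by decide),
      Finset.prod_insert (by decide), Finset.prod_insert (by decide),
      Finset.prod_insert (by decide), Finset.prod_singleton]
    rw [o1, o2, o3, o4, o5, o6, o7, o8]; norm_num
end

section
/- Let ζ ∈ ℂ be a primitive 15th root of unity and define Q : ℤ × ℤ → ℂ by Q(m,n) = (−1)^(n² + mn) · ζ^(5m² + 13mn). Then for S = {(1,0), (2,1), (5,3), (8,5), (3,2), (4,3), (1,1), (0,1)}, every Q(α) with α ∈ S is a root of unity, and the product over α ∈ S of the multiplicative order of Q(α) equals 30⁴ = 810000. -/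
theorem stmt_13 (ζ : ℂ) (hζ : IsPrimitiveRoot ζ 15)
    (Q : ℤ × ℤ → ℂ) (hQ : ∀ m n : ℤ, Q (m, n) = (-1 : ℂ) ^ (n^2 + m*n) * ζ ^ (5*m^2 + 13*m*n))
    (S : Finset (ℤ × ℤ)) (hS : S = {(1,0), (2,1), (5,3), (8,5), (3,2), (4,3), (1,1), (0,1)}) :
    (∀ α ∈ S, IsOfFinOrder (Q α)) ∧ ∏ α ∈ S, orderOf (Q α) = 30^4 := by
  have h15 : ζ ^ (15 : ℕ) = 1 := hζ.pow_eq_one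
  have hord : orderOf (-ζ) = 30 := by
    have h1 : orderOf (-1 : ℂ) = 2 := by
      rw [orderOf_neg_one]
      simp [ringChar.eq_zero]
    have h2 : orderOf ζ = 15 := hζ.eq_orderOf.symm
    have hneg : (-ζ) = (-1) * ζ := by ring
    rw [hneg, (Commute.all (-1 : ℂ) ζ).orderOf_mul_eq_mul_orderOf_of_coprime (by
      rw [h1, h2]; norm_num), h1, h2]
  have key : ∀ k : ℕ, k ≠ 0 → orderOf ((-ζ) ^ k) = 30 / Nat.gcd 30 k := by
    intro k hk
    rw [orderOf_pow' _ hk, hord]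
  have eval : ∀ m n : ℤ, ∀ a b : ℕ, (n^2 + m*n) = (a:ℤ) → (5*m^2+13*m*n) = (b:ℤ) →
      Q (m,n) = (-1:ℂ)^a * ζ^b := by
    intro m n a b ha hb
    rw [hQ m n, ha, hb, zpow_natCast, zpow_natCast]
  have pw : ∀ k q r : ℕ, k = 15*q + r → ζ^k = ζ^r := by
    rintro k q r rfl
    rw [pow_add, pow_mul, h15, one_pow, one_mul]
  have e1 : Q (1,0) = (-ζ) ^ (20 : ℕ) := by
    rw [eval 1 0 0 5 (by norm_num) (by norm_num),
      show ((-ζ)^(20:ℕ)) = ζ^(20:ℕ) from by ring, pw 20 1 5 (by norm_num)]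
    norm_num
  have e2 : Q (2,1) = (-ζ) ^ (1 : ℕ) := by
    rw [eval 2 1 3 46 (by norm_num) (by norm_num),
      show ((-ζ)^(1:ℕ)) = -ζ^(1:ℕ) from by ring, pw 46 3 1 (by norm_num)]
    norm_num
  have e3 : Q (5,3) = (-ζ) ^ (20 : ℕ) := by
    rw [eval 5 3 24 320 (by norm_num) (by norm_num),
      show ((-ζ)^(20:ℕ)) = ζ^(20:ℕ) from by ring, pw 320 21 5 (by norm_num),
      pw 20 1 5 (by norm_num)]
    norm_num
  have e4 : Q (8,5) = (-ζ) ^ (15 : ℕ) := by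
    rw [eval 8 5 65 840 (by norm_num) (by norm_num),
      show ((-ζ)^(15:ℕ)) = -ζ^(15:ℕ) from by ring, pw 840 56 0 (by norm_num),
      pw 15 1 0 (by norm_num)]
    norm_num
  have e5 : Q (3,2) = (-ζ) ^ (18 : ℕ) := by
    rw [eval 3 2 10 123 (by norm_num) (by norm_num),
      show ((-ζ)^(18:ℕ)) = ζ^(18:ℕ) from by ring, pw 123 8 3 (by norm_num),
      pw 18 1 3 (by norm_num)]
    norm_num
  have e6 : Q (4,3) = (-ζ) ^ (11 : ℕ) := by
    rw [eval 4 3 21 236 (by norm_num) (by norm_num),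
      show ((-ζ)^(11:ℕ)) = -ζ^(11:ℕ) from by ring, pw 236 15 11 (by norm_num)]
    norm_num
  have e7 : Q (1,1) = (-ζ) ^ (18 : ℕ) := by
    rw [eval 1 1 2 18 (by norm_num) (by norm_num),
      show ((-ζ)^(18:ℕ)) = ζ^(18:ℕ) from by ring, pw 18 1 3 (by norm_num)]
    norm_num
  have e8 : Q (0,1) = (-ζ) ^ (15 : ℕ) := by
    rw [eval 0 1 1 0 (by norm_num) (by norm_num),
      show ((-ζ)^(15:ℕ)) = -ζ^(15:ℕ) from by ring, pw 15 1 0 (by norm_num)]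
    norm_num
  have o1 : orderOf (Q (1,0)) = 3 := by rw [e1, key 20 (by norm_num)]; decide
  have o2 : orderOf (Q (2,1)) = 30 := by rw [e2, key 1 (by norm_num)]; decide
  have o3 : orderOf (Q (5,3)) = 3 := by rw [e3, key 20 (by norm_num)]; decide
  have o4 : orderOf (Q (8,5)) = 2 := by rw [e4, key 15 (by norm_num)]; decide
  have o5 : orderOf (Q (3,2)) = 5 := by rw [e5, key 18 (by norm_num)]; decide
  have o6 : orderOf (Q (4,3)) = 30 := by rw [e6, key 11 (by norm_num)]; decide
  have o7 : orderOf (Q (1,1)) = 5 := by rw [e7, key 18 (by norm_num)]; decide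
  have o8 : orderOf (Q (0,1)) = 2 := by rw [e8, key 15 (by norm_num)]; decide
  have hfin : IsOfFinOrder (-ζ) := by
    rw [isOfFinOrder_iff_pow_eq_one]
    exact ⟨30, by norm_num, by rw [show ((-ζ)^(30:ℕ)) = (ζ^(15:ℕ))^2 from by ring, h15, one_pow]⟩
  constructor
  · intro α hα
    rw [hS] at hα
    fin_cases hα
    · rw [e1]; exact hfin.pow
    · rw [e2]; exact hfin.pow
    · rw [e3]; exact hfin.pow
    · rw [e4]; exact hfin.pow
    · rw [e5]; exact hfin.pow
    · rw [e6]; exact hfin.pow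
    · rw [e7]; exact hfin.pow
    · rw [e8]; exact hfin.pow
  · rw [hS]
    rw [Finset.prod_insert (by decide), Finset.prod_insert (by decide),
      Finset.prod_insert (by decide), Finset.prod_insert (by decide),
      Finset.prod_insert (by decide), Finset.prod_insert (by decide),
      Finset.prod_insert (by decide), Finset.prod_singleton]
    rw [o1, o2, o3, o4, o5, o6, o7, o8]
    decide
end

section
/- Let ζ ∈ ℂ be a primitive 15th root of unity and define Q : ℤ × ℤ → ℂ by Q(m,n) = (−1)^(n² + mn) · ζ^(3m² + 2mn). Then for S = {(1,0), (4,1), (3,1), (8,3), (5,2), (2,1), (1,1), (0,1)}, every Q(α) with α ∈ S is a root of unity, and the product over α ∈ S of the multiplicative order of Q(α) equals 30⁴ = 810000. -/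
theorem stmt_14 (ζ : ℂ) (hζ : IsPrimitiveRoot ζ 15)
    (Q : ℤ × ℤ → ℂ) (hQ : ∀ m n : ℤ, Q (m, n) = (-1 : ℂ) ^ (n^2 + m*n) * ζ ^ (3*m^2 + 2*m*n))
    (S : Finset (ℤ × ℤ)) (hS : S = {(1,0), (4,1), (3,1), (8,3), (5,2), (2,1), (1,1), (0,1)}) :
    (∀ α ∈ S, IsOfFinOrder (Q α)) ∧ ∏ α ∈ S, orderOf (Q α) = 30^4 := by
  have hord : orderOf ζ = 15 := hζ.eq_orderOf.symm
  have hℂ : ringChar ℂ ≠ 2 := by simp [ringChar.eq_zero]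
  have h10 : orderOf (Q (1,0)) = 5 := by norm_num [hQ, orderOf_pow', hord]
  have h41 : orderOf (Q (4,1)) = 30 := by
    norm_num [hQ, orderOf_neg_of_odd hℂ, orderOf_pow', hord, Nat.odd_iff]
  have h31 : orderOf (Q (3,1)) = 5 := by norm_num [hQ, orderOf_pow', hord]
  have h83 : orderOf (Q (8,3)) = 2 := by
    norm_num [hQ, orderOf_neg_of_odd hℂ, orderOf_pow', hord, Nat.odd_iff]
  have h52 : orderOf (Q (5,2)) = 3 := by norm_num [hQ, orderOf_pow', hord]
  have h21 : orderOf (Q (2,1)) = 30 := by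
    norm_num [hQ, orderOf_neg_of_odd hℂ, orderOf_pow', hord, Nat.odd_iff]
  have h11 : orderOf (Q (1,1)) = 3 := by norm_num [hQ, orderOf_pow', hord]
  have h01 : orderOf (Q (0,1)) = 2 := by norm_num [hQ, hℂ]
  subst hS
  refine ⟨fun α hα => orderOf_pos_iff.mp ?_, ?_⟩
  · fin_cases hα <;> simp [h10, h41, h31, h83, h52, h21, h11, h01]
  · simp [h10, h41, h31, h83, h52, h21, h11, h01]
end

section
/- Let ζ ∈ ℂ be a primitive 3rd root of unity and define Q : ℤ³ → ℂ by Q(m₁,m₂,m₃) = (−1)^(m₃²) · ζ^(m₁² + m₂² + 2m₁m₂ + m₂m₃). Then for S = {(1,0,0), (0,1,0), (0,0,1), (1,1,0), (0,1,1), (2,2,1), (1,1,1), (1,2,1), (1,2,2), (0,2,1), (1,3,2), (2,3,2), (2,4,3)}, every Q(α) with α ∈ S is a root of unity, and the product over α ∈ S of the multiplicative order of Q(α) equals 2⁷·3⁹ = 2519424. -/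
theorem stmt_15 (ζ : ℂ) (hζ : IsPrimitiveRoot ζ 3)
    (Q : ℤ × ℤ × ℤ → ℂ) (hQ : ∀ m1 m2 m3 : ℤ, Q (m1, m2, m3) = (-1 : ℂ) ^ (m3^2) * ζ ^ (m1^2 + m2^2 + 2*m1*m2 + m2*m3))
    (S : Finset (ℤ × ℤ × ℤ)) (hS : S = {(1,0,0), (0,1,0), (0,0,1), (1,1,0), (0,1,1), (2,2,1), (1,1,1), (1,2,1), (1,2,2), (0,2,1), (1,3,2), (2,3,2), (2,4,3)}) :
    (∀ α ∈ S, IsOfFinOrder (Q α)) ∧ ∏ α ∈ S, orderOf (Q α) = 2^7 * 3^9 := by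
  have h3 : ζ ^ 3 = 1 := hζ.pow_eq_one
  have hne : ζ ≠ 1 := hζ.ne_one (by norm_num)
  have h2ne : ζ ^ 2 ≠ 1 := hζ.pow_ne_one_of_pos_of_lt (by norm_num) (by norm_num)
  have hred : ∀ a b : ℕ, ζ ^ (3 * a + b) = ζ ^ b := by
    intro a b
    rw [pow_add, pow_mul, h3, one_pow, one_mul]
  have o3 : orderOf ζ = 3 := orderOf_eq_prime h3 hne
  have o2 : orderOf (-1 : ℂ) = 2 := orderOf_eq_prime (by norm_num) (by norm_num)
  have o3' : orderOf (ζ ^ 2) = 3 := by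
    refine orderOf_eq_prime ?_ h2ne
    rw [← pow_mul, show 2 * 3 = 3 * 2 from rfl, pow_mul, h3, one_pow]
  have o6 : orderOf (-ζ ^ 2) = 6 := by
    have h : (-ζ ^ 2) = (-1) * ζ ^ 2 := by ring
    rw [h, (Commute.all (-1 : ℂ) (ζ ^ 2)).orderOf_mul_eq_mul_orderOf_of_coprime
      (by rw [o2, o3']; norm_num), o2, o3']
  -- values
  have v1 : Q (1,0,0) = ζ := by rw [hQ 1 0 0]; norm_num
  have v2 : Q (0,1,0) = ζ := by rw [hQ 0 1 0]; norm_num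
  have v3 : Q (0,0,1) = -1 := by rw [hQ 0 0 1]; norm_num
  have v4 : Q (1,1,0) = ζ := by
    rw [hQ 1 1 0]; norm_num [zpow_ofNat]
    rw [show (4 : ℕ) = 3 * 1 + 1 from rfl, hred, pow_one]
  have v5 : Q (0,1,1) = -ζ ^ 2 := by
    rw [hQ 0 1 1]; norm_num [zpow_ofNat]
  have v6 : Q (2,2,1) = -1 := by
    rw [hQ 2 2 1]; norm_num [zpow_ofNat]
    rw [show (18 : ℕ) = 3 * 6 + 0 from rfl, hred, pow_zero]
  have v7 : Q (1,1,1) = -ζ ^ 2 := by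
    rw [hQ 1 1 1]; norm_num [zpow_ofNat]
    rw [show (5 : ℕ) = 3 * 1 + 2 from rfl, hred]
  have v8 : Q (1,2,1) = -ζ ^ 2 := by
    rw [hQ 1 2 1]; norm_num [zpow_ofNat]
    rw [show (11 : ℕ) = 3 * 3 + 2 from rfl, hred]
  have v9 : Q (1,2,2) = ζ := by
    rw [hQ 1 2 2]; norm_num [zpow_ofNat]
    rw [show (13 : ℕ) = 3 * 4 + 1 from rfl, hred, pow_one]
  have v10 : Q (0,2,1) = -1 := by
    rw [hQ 0 2 1]; norm_num [zpow_ofNat]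
    rw [show (6 : ℕ) = 3 * 2 + 0 from rfl, hred, pow_zero]
  have v11 : Q (1,3,2) = ζ := by
    rw [hQ 1 3 2]; norm_num [zpow_ofNat]
    rw [show (22 : ℕ) = 3 * 7 + 1 from rfl, hred, pow_one]
  have v12 : Q (2,3,2) = ζ := by
    rw [hQ 2 3 2]; norm_num [zpow_ofNat]
    rw [show (31 : ℕ) = 3 * 10 + 1 from rfl, hred, pow_one]
  have v13 : Q (2,4,3) = -1 := by
    rw [hQ 2 4 3]; norm_num [zpow_ofNat]
    rw [show (48 : ℕ) = 3 * 16 + 0 from rfl, hred, pow_zero]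
  have fo : ∀ x : ℂ, orderOf x ≠ 0 → IsOfFinOrder x := by
    intro x hx
    by_contra h
    exact hx (orderOf_eq_zero_iff.mpr h)
  subst hS
  constructor
  · intro α hα
    fin_cases hα <;>
      simp only [v1, v2, v3, v4, v5, v6, v7, v8, v9, v10, v11, v12, v13] <;>
      [exact fo _ (by rw [o3]; norm_num); exact fo _ (by rw [o3]; norm_num);
       exact fo _ (by rw [o2]; norm_num); exact fo _ (by rw [o3]; norm_num);
       exact fo _ (by rw [o6]; norm_num); exact fo _ (by rw [o2]; norm_num);
       exact fo _ (by rw [o6]; norm_num); exact fo _ (by rw [o6]; norm_num);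
       exact fo _ (by rw [o3]; norm_num); exact fo _ (by rw [o2]; norm_num);
       exact fo _ (by rw [o3]; norm_num); exact fo _ (by rw [o3]; norm_num);
       exact fo _ (by rw [o2]; norm_num)]
  · rw [show ({(1,0,0), (0,1,0), (0,0,1), (1,1,0), (0,1,1), (2,2,1), (1,1,1), (1,2,1), (1,2,2), (0,2,1), (1,3,2), (2,3,2), (2,4,3)} : Finset (ℤ × ℤ × ℤ)) =
      {(1,0,0), (0,1,0), (0,0,1), (1,1,0), (0,1,1), (2,2,1), (1,1,1), (1,2,1), (1,2,2), (0,2,1), (1,3,2), (2,3,2), (2,4,3)} from rfl]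
    rw [Finset.prod_insert (by decide), Finset.prod_insert (by decide),
      Finset.prod_insert (by decide), Finset.prod_insert (by decide),
      Finset.prod_insert (by decide), Finset.prod_insert (by decide),
      Finset.prod_insert (by decide), Finset.prod_insert (by decide),
      Finset.prod_insert (by decide), Finset.prod_insert (by decide),
      Finset.prod_insert (by decide), Finset.prod_insert (by decide),
      Finset.prod_singleton]
    rw [v1, v2, v3, v4, v5, v6, v7, v8, v9, v10, v11, v12, v13, o3, o2, o6]
    norm_num
end

section
/- Let ζ ∈ ℂ be a primitive 6th root of unity and define Q : ℤ³ → ℂ by Q(m₁,m₂,m₃) = ζ^(m₁² + m₂² + 3m₃² + 5m₁m₂ + 4m₂m₃). Then for S = {(1,0,0), (0,1,0), (0,0,1), (1,1,0), (0,1,1), (2,2,1), (1,1,1), (1,2,1), (1,2,2), (0,2,1), (1,3,2), (2,3,2), (2,4,3)}, every Q(α) with α ∈ S is a root of unity, and the product over α ∈ S of the multiplicative order of Q(α) equals 2¹⁰·3⁹ = 20155392. -/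
theorem stmt_16 (ζ : ℂ) (hζ : IsPrimitiveRoot ζ 6)
    (Q : ℤ × ℤ × ℤ → ℂ) (hQ : ∀ m1 m2 m3 : ℤ, Q (m1, m2, m3) = ζ ^ (m1^2 + m2^2 + 3*m3^2 + 5*m1*m2 + 4*m2*m3))
    (S : Finset (ℤ × ℤ × ℤ)) (hS : S = {(1,0,0), (0,1,0), (0,0,1), (1,1,0), (0,1,1), (2,2,1), (1,1,1), (1,2,1), (1,2,2), (0,2,1), (1,3,2), (2,3,2), (2,4,3)}) :
    (∀ α ∈ S, IsOfFinOrder (Q α)) ∧ ∏ α ∈ S, orderOf (Q α) = 2^10 * 3^9 := by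
  have hne : ζ ≠ 0 := hζ.ne_zero (by norm_num)
  have h6 : ζ ^ (6:ℕ) = 1 := hζ.pow_eq_one
  have h6' : ζ ^ (6:ℤ) = 1 := by exact_mod_cast h6
  have hred : ∀ (e : ℤ) (r : ℕ), e % 6 = (r:ℤ) → ζ ^ e = ζ ^ r := by
    intro e r h
    have he : e = 6 * (e / 6) + (r:ℤ) := by omega
    calc ζ ^ e = ζ ^ (6 * (e/6) + (r:ℤ)) := by rw [← he]
    _ = (ζ^(6:ℤ))^(e/6) * ζ^((r:ℕ):ℤ) := by rw [zpow_add₀ hne, zpow_mul]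
    _ = ζ ^ r := by rw [h6', one_zpow, one_mul, zpow_natCast]
  have v1 : Q (1,0,0) = ζ ^ (1:ℕ) := by rw [hQ]; exact hred _ 1 (by norm_num)
  have v2 : Q (0,1,0) = ζ ^ (1:ℕ) := by rw [hQ]; exact hred _ 1 (by norm_num)
  have v3 : Q (0,0,1) = ζ ^ (3:ℕ) := by rw [hQ]; exact hred _ 3 (by norm_num)
  have v4 : Q (1,1,0) = ζ ^ (1:ℕ) := by rw [hQ]; exact hred _ 1 (by norm_num)
  have v5 : Q (0,1,1) = ζ ^ (2:ℕ) := by rw [hQ]; exact hred _ 2 (by norm_num)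
  have v6 : Q (2,2,1) = ζ ^ (3:ℕ) := by rw [hQ]; exact hred _ 3 (by norm_num)
  have v7 : Q (1,1,1) = ζ ^ (2:ℕ) := by rw [hQ]; exact hred _ 2 (by norm_num)
  have v8 : Q (1,2,1) = ζ ^ (2:ℕ) := by rw [hQ]; exact hred _ 2 (by norm_num)
  have v9 : Q (1,2,2) = ζ ^ (1:ℕ) := by rw [hQ]; exact hred _ 1 (by norm_num)
  have v10 : Q (0,2,1) = ζ ^ (3:ℕ) := by rw [hQ]; exact hred _ 3 (by norm_num)
  have v11 : Q (1,3,2) = ζ ^ (1:ℕ) := by rw [hQ]; exact hred _ 1 (by norm_num)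
  have v12 : Q (2,3,2) = ζ ^ (1:ℕ) := by rw [hQ]; exact hred _ 1 (by norm_num)
  have v13 : Q (2,4,3) = ζ ^ (3:ℕ) := by rw [hQ]; exact hred _ 3 (by norm_num)
  have hfin : IsOfFinOrder ζ := isOfFinOrder_iff_pow_eq_one.mpr ⟨6, by norm_num, h6⟩
  have o1 : orderOf ζ = 6 := hζ.eq_orderOf.symm
  have o2 : orderOf (ζ ^ (2:ℕ)) = 3 := by
    rw [orderOf_pow' ζ (by norm_num), o1]; rfl
  have o3 : orderOf (ζ ^ (3:ℕ)) = 2 := by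
    rw [orderOf_pow' ζ (by norm_num), o1]; rfl
  subst hS
  constructor
  · intro α hα
    fin_cases hα <;>
      simp only [v1, v2, v3, v4, v5, v6, v7, v8, v9, v10, v11, v12, v13] <;>
      exact hfin.pow
  · rw [Finset.prod_insert (by decide), Finset.prod_insert (by decide),
      Finset.prod_insert (by decide), Finset.prod_insert (by decide),
      Finset.prod_insert (by decide), Finset.prod_insert (by decide),
      Finset.prod_insert (by decide), Finset.prod_insert (by decide),
      Finset.prod_insert (by decide), Finset.prod_insert (by decide),
      Finset.prod_insert (by decide), Finset.prod_insert (by decide),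
      Finset.prod_singleton]
    rw [v1, v2, v3, v4, v5, v6, v7, v8, v9, v10, v11, v12, v13, pow_one, o1, o2, o3]
    norm_num
end

section
/- Let q ∈ ℂ be a root of unity with q ≠ 1 and q ≠ −1, let M be the multiplicative order of q and N the multiplicative order of −q⁻¹. Define Q : ℤ⁴ → ℂ by Q(m₁,m₂,m₃,m₄) = (−1)^(m₃² + m₃m₄ + m₄²) · q^(m₁² + m₂² − m₁m₂ − m₂m₃ + m₃m₄ − m₄²). Then for S = {(1,0,0,0), (0,1,0,0), (0,0,1,0), (0,0,0,1), (1,1,0,0), (0,1,1,0), (0,0,1,1), (1,1,1,0), (0,1,1,1), (1,1,1,1), (1,1,2,1), (1,2,3,1), (0,1,2,1), (1,2,2,1), (1,2,3,2)}, every Q(α) with α ∈ S is a root of unity, and the product over α ∈ S of the multiplicative order of Q(α) equals 2⁹·M³·N³. -/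
theorem stmt_19 (q : ℂ) (hq : IsOfFinOrder q) (hq1 : q ≠ 1) (hq2 : q ≠ -1)
    (M N : ℕ) (hM : M = orderOf q) (hN : N = orderOf (-q⁻¹))
    (Q : ℤ × ℤ × ℤ × ℤ → ℂ)
    (hQ : ∀ m1 m2 m3 m4 : ℤ, Q (m1, m2, m3, m4) =
      (-1 : ℂ) ^ (m3^2 + m3*m4 + m4^2) *
        q ^ (m1^2 + m2^2 - m1*m2 - m2*m3 + m3*m4 - m4^2))
    (S : Finset (ℤ × ℤ × ℤ × ℤ))
    (hS : S = {(1,0,0,0), (0,1,0,0), (0,0,1,0), (0,0,0,1), (1,1,0,0), (0,1,1,0),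
      (0,0,1,1), (1,1,1,0), (0,1,1,1), (1,1,1,1), (1,1,2,1), (1,2,3,1),
      (0,1,2,1), (1,2,2,1), (1,2,3,2)}) :
    (∀ α ∈ S, IsOfFinOrder (Q α)) ∧ ∏ α ∈ S, orderOf (Q α) = 2^9 * M^3 * N^3 := by
  have hqi : IsOfFinOrder (q⁻¹ : ℂ) := by
    obtain ⟨n, hn, hqn⟩ := hq
    exact ⟨n, hn, by simp [isPeriodicPt_mul_iff_pow_eq_one] at hqn ⊢; simp [← inv_pow, hqn]⟩
  have hm1 : IsOfFinOrder (-1 : ℂ) :=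
    isOfFinOrder_iff_pow_eq_one.mpr ⟨2, by norm_num, by norm_num⟩
  have hmqi : IsOfFinOrder (-q⁻¹ : ℂ) := by
    have := hm1.mul hqi
    simpa using this
  have hQ1 : Q (1,0,0,0) = q := by have := hQ 1 0 0 0; norm_num at this; exact this
  have hQ2 : Q (0,1,0,0) = q := by have := hQ 0 1 0 0; norm_num at this; exact this
  have hQ3 : Q (0,0,1,0) = -1 := by have := hQ 0 0 1 0; norm_num at this; exact this
  have hQ4 : Q (0,0,0,1) = -q⁻¹ := by
    have := hQ 0 0 0 1; norm_num [zpow_neg] at this; rw [this]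
  have hQ5 : Q (1,1,0,0) = q := by have := hQ 1 1 0 0; norm_num at this; exact this
  have hQ6 : Q (0,1,1,0) = -1 := by have := hQ 0 1 1 0; norm_num at this; exact this
  have hQ7 : Q (0,0,1,1) = -1 := by have := hQ 0 0 1 1; norm_num at this; exact this
  have hQ8 : Q (1,1,1,0) = -1 := by have := hQ 1 1 1 0; norm_num at this; exact this
  have hQ9 : Q (0,1,1,1) = -1 := by have := hQ 0 1 1 1; norm_num at this; exact this
  have hQ10 : Q (1,1,1,1) = -1 := by have := hQ 1 1 1 1; norm_num at this; exact this
  have hQ11 : Q (1,1,2,1) = -1 := by have := hQ 1 1 2 1; norm_num at this; exact this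
  have hQ12 : Q (1,2,3,1) = -q⁻¹ := by
    have := hQ 1 2 3 1; norm_num [zpow_neg] at this; rw [this]
  have hQ13 : Q (0,1,2,1) = -1 := by have := hQ 0 1 2 1; norm_num at this; exact this
  have hQ14 : Q (1,2,2,1) = -1 := by have := hQ 1 2 2 1; norm_num at this; exact this
  have hQ15 : Q (1,2,3,2) = -q⁻¹ := by
    have := hQ 1 2 3 2; norm_num [zpow_neg] at this; rw [this]
  subst hS
  constructor
  · intro α hα
    fin_cases hα <;>
      simp only [hQ1, hQ2, hQ3, hQ4, hQ5, hQ6, hQ7, hQ8, hQ9, hQ10, hQ11, hQ12,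
        hQ13, hQ14, hQ15] <;>
      first | exact hq | exact hm1 | exact hmqi
  · have hord1 : orderOf (-1 : ℂ) = 2 := by
      rw [orderOf_neg_one]
      norm_num [ringChar.eq_iff.mpr (CharP.ofCharZero ℂ)]
    rw [show ({(1,0,0,0), (0,1,0,0), (0,0,1,0), (0,0,0,1), (1,1,0,0), (0,1,1,0),
      (0,0,1,1), (1,1,1,0), (0,1,1,1), (1,1,1,1), (1,1,2,1), (1,2,3,1),
      (0,1,2,1), (1,2,2,1), (1,2,3,2)} : Finset (ℤ × ℤ × ℤ × ℤ)) =
      [((1:ℤ),(0:ℤ),(0:ℤ),(0:ℤ)), (0,1,0,0), (0,0,1,0), (0,0,0,1), (1,1,0,0), (0,1,1,0),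
      (0,0,1,1), (1,1,1,0), (0,1,1,1), (1,1,1,1), (1,1,2,1), (1,2,3,1),
      (0,1,2,1), (1,2,2,1), (1,2,3,2)].toFinset by decide]
    rw [List.prod_toFinset _ (by decide)]
    simp only [List.map_cons, List.map_nil, List.prod_cons, List.prod_nil,
      hQ1, hQ2, hQ3, hQ4, hQ5, hQ6, hQ7, hQ8, hQ9, hQ10, hQ11, hQ12, hQ13, hQ14, hQ15,
      hord1, ← hM, ← hN]
    ring
end
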